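/- The map from equivalence classes of generic m×n matrices (m ≥ n+2, n ≥ 2) to conjugacy classes of subgroups of SL_{m+n+1}(ℝ) given by [T] ↦ [L_T] is well defined and injective: L_T is conjugate to L_S if and only if UC of the projectivized rows of T equals UC of the projectivized rows of S. -/

import Mathlib

open Matrix Set
open scoped LinearAlgebra.Projectivization

/-- An `m × ν` real matrix is generic if every `ν` of its rows are linearly
independent. -/
def Generic {m ν : ℕ} (T : Matrix (Fin m) (Fin ν) ℝ) : Prop :=
  ∀ s : Finset (Fin m), s.card = ν → LinearIndependent ℝ (fun i : s => T i)

lemma Generic.row_ne_zero {m ν : ℕ} (hn : 1 ≤ ν) (hnm : ν ≤ m)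
    {T : Matrix (Fin m) (Fin ν) ℝ} (hT : Generic T) (j : Fin m) : T j ≠ 0 := by
  obtain ⟨t, hjt, hcard⟩ := Finset.exists_superset_card_eq
    (s := ({j} : Finset (Fin m))) (by simpa using hn) (by simpa using hnm)
  exact (hT t hcard).ne_zero ⟨j, hjt (Finset.mem_singleton_self j)⟩

/-- The projectivized rows of a generic matrix, an augmented basis in `RP^n`. -/
noncomputable def projRows {m n : ℕ} (hnm : n + 1 ≤ m)
    (T : Matrix (Fin m) (Fin (n + 1)) ℝ) (hT : Generic T) :
    Fin m → ℙ ℝ (Fin (n + 1) → ℝ) := fun j =>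
  Projectivization.mk ℝ (T j) (hT.row_ne_zero (Nat.succ_le_succ (Nat.zero_le n)) hnm j)

/-- The standard projective basis of `RP^n`. -/
noncomputable def stdProjBasis (n : ℕ) : Fin (n + 2) → ℙ ℝ (Fin (n + 1) → ℝ) := fun i =>
  if h : (i : ℕ) < n + 1 then
    Projectivization.mk ℝ (Pi.single (⟨i, h⟩ : Fin (n + 1)) (1 : ℝ))
      (by
        intro hzero
        have := congrFun hzero ⟨i, h⟩
        simp at this)
  else
    Projectivization.mk ℝ (fun _ => (1 : ℝ))
      (by
        intro hzero
        have := congrFun hzero ⟨0, Nat.succ_pos n⟩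
        simp at this)

/-- The projective transformation induced by a linear automorphism. -/
noncomputable def projMap {n : ℕ} (e : (Fin (n + 1) → ℝ) ≃ₗ[ℝ] (Fin (n + 1) → ℝ)) :
    ℙ ℝ (Fin (n + 1) → ℝ) → ℙ ℝ (Fin (n + 1) → ℝ) :=
  Projectivization.map (e : (Fin (n + 1) → ℝ) →ₗ[ℝ] (Fin (n + 1) → ℝ)) e.injective

/-- The unordered generalized cross ratio of a family of `m` points of `RP^n`. -/
noncomputable def UC {n m : ℕ} (y : Fin m → ℙ ℝ (Fin (n + 1) → ℝ)) :
    Set (Fin m → ℙ ℝ (Fin (n + 1) → ℝ)) :=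
  {z | ∃ σ : Equiv.Perm (Fin m), ∃ e : (Fin (n + 1) → ℝ) ≃ₗ[ℝ] (Fin (n + 1) → ℝ),
    (∀ i, z i = projMap e (y (σ i))) ∧
    ∀ i : Fin (n + 2), ∀ h : (i : ℕ) < m, z ⟨i, h⟩ = stdProjBasis n i}

/-- The upper-right block of an element of `L_T`. -/
def rhoBlock {m ν : ℕ} (T : Matrix (Fin m) (Fin ν) ℝ) (a : Fin m → ℝ) (b : Fin ν → ℝ) :
    Matrix (Fin (m + 1)) (Fin ν) ℝ :=
  fun i j => if h : (i : ℕ) < m then a ⟨i, h⟩ * T ⟨i, h⟩ j else b j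

/-- The homomorphism `ρ_T : ℝ^(m+ν) → SL_{m+ν+1}(ℝ)`. -/
def rhoT {m ν : ℕ} (T : Matrix (Fin m) (Fin ν) ℝ) (a : Fin m → ℝ) (b : Fin ν → ℝ) :
    Matrix.SpecialLinearGroup (Fin (m + 1) ⊕ Fin ν) ℝ :=
  ⟨Matrix.fromBlocks 1 (rhoBlock T a b) 0 1, by simp [Matrix.det_fromBlocks_zero₂₁]⟩

/-- The group `L_T ≤ SL_{m+ν+1}(ℝ)`, the image of `ρ_T`. -/
def LTgrp {m ν : ℕ} (T : Matrix (Fin m) (Fin ν) ℝ) :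
    Set (Matrix.SpecialLinearGroup (Fin (m + 1) ⊕ Fin ν) ℝ) :=
  {g | ∃ a b, g = rhoT T a b}

/-!
Write the conjugating matrix in blocks `[[P, X], [Y, Z]]` for `Fin (m + 1) ⊕ Fin (n + 1)`.
Conjugating `ρ_T(a, b)` into `ρ_S(a', b')` forces `Y = 0` and `P · B_T = B_S · Z`, where `B_T`
and `B_S` are the upper-right blocks. Feeding in `a = 0` and two different `b` shows, as `n ≥ 1`, that the
last column of `P` vanishes above its corner; then `det P ≠ 0` gives every column `i < m` of `P`
a nonzero entry `k < m`, and row `k` of `P · B_T = B_S · Z` makes `T i` proportional to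
`S k · Z`. Genericity makes `i ↦ k` a permutation, so the rows of `T` and of `S` agree
projectively up to reordering. Conversely, such an agreement is realised by a block-diagonal
conjugation `diag(D · Perm, Q)`. Since the first `n + 2` rows of a generic matrix form a
projective frame, `UC` of its rows is nonempty, and two families have the same `UC` exactly
when they agree projectively up to reordering.
-/

open Function

section projMap

variable {n : ℕ}

lemma projMap_mk (e : (Fin (n + 1) → ℝ) ≃ₗ[ℝ] (Fin (n + 1) → ℝ)) (v : Fin (n + 1) → ℝ)
    (hv : v ≠ 0) :
    projMap e (Projectivization.mk ℝ v hv) = Projectivization.mk ℝ (e v) (by simpa using hv) :=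
  rfl

lemma projMap_trans (e f : (Fin (n + 1) → ℝ) ≃ₗ[ℝ] (Fin (n + 1) → ℝ))
    (x : ℙ ℝ (Fin (n + 1) → ℝ)) : projMap (e ≪≫ₗ f) x = projMap f (projMap e x) := by
  induction x using Projectivization.ind with
  | h v hv => rfl

lemma projMap_symm_apply (e : (Fin (n + 1) → ℝ) ≃ₗ[ℝ] (Fin (n + 1) → ℝ))
    (x : ℙ ℝ (Fin (n + 1) → ℝ)) : projMap e.symm (projMap e x) = x := by
  induction x using Projectivization.ind with
  | h v hv => simp [projMap_mk]

end projMap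

namespace Generic

variable {m ν : ℕ} {T : Matrix (Fin m) (Fin ν) ℝ}

lemma linearIndepOn (hT : Generic T) (hνm : ν ≤ m) {s : Finset (Fin m)} (hs : s.card ≤ ν) :
    LinearIndepOn ℝ T s := by
  obtain ⟨t, hst, ht⟩ := Finset.exists_superset_card_eq hs (by simpa using hνm)
  exact LinearIndepOn.mono (hT t ht) (Finset.coe_subset.2 hst)

lemma linearIndependent_comp (hT : Generic T) {f : Fin ν → Fin m} (hf : Injective f) :
    LinearIndependent ℝ (T ∘ f) := by
  have h : LinearIndepOn ℝ T (Finset.univ.map ⟨f, hf⟩ : Finset (Fin m)) :=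
    hT _ (by simp)
  rw [Finset.coe_map, Finset.coe_univ] at h
  exact linearIndepOn_univ_iff.1 (h.comp_of_image hf.injOn)

lemma ne_smul (hT : Generic T) (h2 : 2 ≤ ν) (hνm : ν ≤ m) {i j : Fin m} (hij : i ≠ j) (c : ℝ) :
    T i ≠ c • T j := by
  intro hc
  have hij' : LinearIndepOn ℝ T {i, j} := by
    simpa using hT.linearIndepOn hνm (s := {i, j}) (Finset.card_le_two.trans h2)
  exact one_ne_zero ((LinearIndepOn.pair_iff T hij).1 hij' 1 (-c) (by rw [hc]; module)).1

end Generic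

lemma Generic.projRows_injective {m n : ℕ} {T : Matrix (Fin m) (Fin (n + 1)) ℝ}
    (hT : Generic T) (hn : 1 ≤ n) (hnm : n + 1 ≤ m) : Injective (projRows hnm T hT) := by
  intro i j hij
  by_contra hne
  obtain ⟨c, hc⟩ := (Projectivization.mk_eq_mk_iff' ℝ _ _ _ _).1 hij
  exact hT.ne_smul (by omega) hnm hne c hc.symm

def ProjEquivalent {n : ℕ} {ι : Type*} (y y' : ι → ℙ ℝ (Fin (n + 1) → ℝ)) : Prop :=
  ∃ σ : Equiv.Perm ι, ∃ e : (Fin (n + 1) → ℝ) ≃ₗ[ℝ] (Fin (n + 1) → ℝ),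
    ∀ i, y i = projMap e (y' (σ i))

namespace ProjEquivalent

variable {n : ℕ} {ι : Type*} {y y' y'' : ι → ℙ ℝ (Fin (n + 1) → ℝ)}

lemma symm (h : ProjEquivalent y y') : ProjEquivalent y' y := by
  obtain ⟨σ, e, h⟩ := h
  refine ⟨σ.symm, e.symm, fun i => ?_⟩
  rw [h, Equiv.apply_symm_apply, projMap_symm_apply]

lemma trans (h : ProjEquivalent y y') (h' : ProjEquivalent y' y'') : ProjEquivalent y y'' := by
  obtain ⟨σ, e, h⟩ := h
  obtain ⟨σ', e', h'⟩ := h'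
  exact ⟨σ.trans σ', e' ≪≫ₗ e, fun i => by rw [h, h', projMap_trans]; rfl⟩

lemma of_injective [Finite ι] (hy : Injective y) (τ : ι → ι)
    (e : (Fin (n + 1) → ℝ) ≃ₗ[ℝ] (Fin (n + 1) → ℝ)) (h : ∀ i, y i = projMap e (y' (τ i))) :
    ProjEquivalent y y' := by
  have hτ : Injective τ := fun i j hij => hy (by rw [h, h j, hij])
  exact ⟨Equiv.ofBijective τ hτ.bijective_of_finite, e, h⟩

end ProjEquivalent

section UC

variable {n m : ℕ} {y y' z : Fin m → ℙ ℝ (Fin (n + 1) → ℝ)}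

lemma mem_UC_iff : z ∈ UC y ↔
    ProjEquivalent z y ∧ ∀ i : Fin (n + 2), ∀ h : (i : ℕ) < m, z ⟨i, h⟩ = stdProjBasis n i := by
  simp only [UC, ProjEquivalent, Set.mem_ofPred_eq, exists_and_right]

lemma UC_eq_of_projEquivalent (h : ProjEquivalent y y') : UC y = UC y' := by
  ext z
  simp only [mem_UC_iff]
  exact and_congr_left fun _ => ⟨fun hz => hz.trans h, fun hz => hz.trans h.symm⟩

lemma UC_eq_iff_projEquivalent (hy : (UC y).Nonempty) : UC y = UC y' ↔ ProjEquivalent y y' := by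
  refine ⟨fun h => ?_, UC_eq_of_projEquivalent⟩
  obtain ⟨z, hz⟩ := hy
  have hz' : z ∈ UC y' := h ▸ hz
  exact ((mem_UC_iff.1 hz).1.symm).trans (mem_UC_iff.1 hz').1

end UC

lemma Module.Basis.repr_ne_zero_of_linearIndependent_update {ι K V : Type*} [DecidableEq ι]
    [Field K] [AddCommGroup V] [Module K V] (B : Basis ι K V) {v : V} {j : ι}
    (h : LinearIndependent K (update B j v)) : B.repr v j ≠ 0 := by
  intro h0
  have hv : v ∈ Submodule.span K (B '' {j}ᶜ) :=
    B.mem_span_image.2 fun i hi hij => Finsupp.mem_support_iff.1 hi (hij ▸ h0)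
  have himage : update B j v '' {j}ᶜ = B '' {j}ᶜ :=
    Set.image_congr fun i hi => update_of_ne hi _ _
  exact h.notMem_span_image (s := {j}ᶜ) (x := j) (by simp) (by rwa [update_self, himage])

section stdProjBasis

variable {n : ℕ}

lemma stdProjBasis_castSucc (j : Fin (n + 1)) :
    stdProjBasis n j.castSucc = Projectivization.mk ℝ (Pi.single j 1) (by simp) := by
  simp [stdProjBasis, Fin.is_le]

lemma stdProjBasis_last :
    stdProjBasis n (Fin.last _) =
      Projectivization.mk ℝ (fun _ => 1) (ne_iff.2 ⟨0, one_ne_zero⟩) := by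
  simp [stdProjBasis]

theorem exists_projMap_eq_stdProjBasis (v : Fin (n + 2) → Fin (n + 1) → ℝ)
    (hv : ∀ f : Fin (n + 1) → Fin (n + 2), Injective f → LinearIndependent ℝ (v ∘ f)) :
    ∃ e : (Fin (n + 1) → ℝ) ≃ₗ[ℝ] (Fin (n + 1) → ℝ),
      ∀ i (hi : v i ≠ 0), projMap e (Projectivization.mk ℝ (v i) hi) = stdProjBasis n i := by
  classical
  let B := basisOfLinearIndependentOfCardEqFinrank (hv _ (Fin.castSucc_injective _)) (by simp)
  have hB (j) : B j = v j.castSucc := by simp [B]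
  set d := B.repr (v (Fin.last _))
  have hd (j) : d j ≠ 0 := by
    refine B.repr_ne_zero_of_linearIndependent_update ?_
    have hswap : update B j (v (Fin.last _)) =
        v ∘ Equiv.swap j.castSucc (Fin.last _) ∘ Fin.castSucc := by
      ext k : 1
      rcases eq_or_ne k j with rfl | hk
      · simp
      · simp [hk, hB, Equiv.swap_apply_of_ne_of_ne, (Fin.castSucc_lt_last k).ne]
    rw [hswap]
    exact hv _ ((Equiv.injective _).comp (Fin.castSucc_injective _))
  -- coordinates in the basis of the first `n + 1` vectors, rescaled so that the last vector
  -- becomes `(1, …, 1)`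
  let e := (B.unitsSMul fun j => Units.mk0 (d j) (hd j)).equivFun
  refine ⟨e, fun i hi => ?_⟩
  rw [projMap_mk]
  induction i using Fin.lastCases with
  | last =>
    rw [stdProjBasis_last, Projectivization.mk_eq_mk_iff']
    exact ⟨1, by ext k; simp [e, d, hd, Units.smul_def]⟩
  | cast j =>
    rw [stdProjBasis_castSucc, Projectivization.mk_eq_mk_iff']
    refine ⟨(d j)⁻¹, ?_⟩
    ext k
    rcases eq_or_ne k j with rfl | hk
    · simp [e, ← hB, Units.smul_def]
    · simp [e, ← hB, hk]

end stdProjBasis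

lemma UC_projRows_nonempty {n m : ℕ} (hnm : n + 2 ≤ m) (T : Matrix (Fin m) (Fin (n + 1)) ℝ)
    (hT : Generic T) : (UC (projRows (by omega) T hT)).Nonempty := by
  obtain ⟨e, he⟩ := exists_projMap_eq_stdProjBasis (fun i => T (Fin.castLE hnm i))
    fun f hf => hT.linearIndependent_comp ((Fin.castLE_injective hnm).comp hf)
  exact ⟨fun i => projMap e (projRows _ T hT i),
    mem_UC_iff.2 ⟨⟨1, e, fun i => rfl⟩, fun i _ => he i _⟩⟩

section rhoBlock

variable {m ν : ℕ} (T : Matrix (Fin m) (Fin ν) ℝ) (a : Fin m → ℝ) (b : Fin ν → ℝ)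

@[simp]
lemma rhoBlock_castSucc (i : Fin m) : rhoBlock T a b i.castSucc = a i • T i := by
  ext j
  simp [rhoBlock]

@[simp]
lemma rhoBlock_last : rhoBlock T a b (Fin.last m) = b := by
  ext j
  simp [rhoBlock]

lemma mul_rhoBlock_row {κ : Type*} (M : Matrix κ (Fin (m + 1)) ℝ) (k : κ) :
    (M * rhoBlock T a b) k = ∑ i, (M k i.castSucc * a i) • T i + M k (Fin.last m) • b := by
  simp [mul_apply_eq_vecMul, vecMul_eq_sum, Fin.sum_univ_castSucc, smul_smul]

lemma mul_rhoBlock_zero_row {κ : Type*} (M : Matrix κ (Fin (m + 1)) ℝ) (k : κ) :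
    (M * rhoBlock T 0 b) k = M k (Fin.last m) • b := by
  simp [mul_rhoBlock_row]

lemma mul_rhoBlock_single_row {κ : Type*} (M : Matrix κ (Fin (m + 1)) ℝ) (i : Fin m) (k : κ) :
    (M * rhoBlock T (Pi.single i 1) 0) k = M k i.castSucc • T i := by
  simp [mul_rhoBlock_row, Pi.single_apply]

lemma rhoBlock_mul_row_castSucc (Z : Matrix (Fin ν) (Fin ν) ℝ) (k : Fin m) :
    (rhoBlock T a b * Z) k.castSucc = a k • (T k ᵥ* Z) := by
  rw [mul_apply_eq_vecMul, rhoBlock_castSucc, smul_vecMul]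

lemma rhoBlock_mul_row_last (Z : Matrix (Fin ν) (Fin ν) ℝ) :
    (rhoBlock T a b * Z) (Fin.last m) = b ᵥ* Z := by
  rw [mul_apply_eq_vecMul, rhoBlock_last]

lemma rhoT_coe : (rhoT T a b : Matrix (Fin (m + 1) ⊕ Fin ν) (Fin (m + 1) ⊕ Fin ν) ℝ) =
    fromBlocks 1 (rhoBlock T a b) 0 1 :=
  rfl

end rhoBlock

lemma eq_zero_of_forall_smul_single_eq {ν : ℕ} (h2 : 2 ≤ ν) {x : ℝ} {w : Fin ν → ℝ}
    (h : ∀ j, ∃ s : ℝ, x • Pi.single j 1 = s • w) : x = 0 := by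
  obtain ⟨s₀, h₀⟩ := h ⟨0, by omega⟩
  obtain ⟨s₁, h₁⟩ := h ⟨1, by omega⟩
  have e₀₀ := congrFun h₀ ⟨0, by omega⟩
  have e₀₁ := congrFun h₀ ⟨1, by omega⟩
  have e₁₁ := congrFun h₁ ⟨1, by omega⟩
  simp only [Pi.smul_apply, Pi.single_eq_same, Pi.single_eq_of_ne, ne_eq, Fin.mk.injEq,
    smul_eq_mul, mul_one, mul_zero, zero_eq_mul, one_ne_zero, not_false_eq_true] at e₀₀ e₀₁ e₁₁
  rcases e₀₁ with rfl | hw <;> simp_all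

lemma Matrix.det_eq_mul_det_submatrix_castSucc {m : ℕ} {R : Type*} [CommRing R]
    (P : Matrix (Fin (m + 1)) (Fin (m + 1)) R) (h : ∀ k : Fin m, P k.castSucc (Fin.last m) = 0) :
    P.det = P (Fin.last m) (Fin.last m) * (P.submatrix Fin.castSucc Fin.castSucc).det := by
  simp [det_succ_column P (Fin.last m), Fin.sum_univ_castSucc, h]

lemma Matrix.blocks_of_fromBlocks_mul_eq_mul_fromBlocks {l n α : Type*} [Fintype l] [Fintype n]
    [DecidableEq l] [DecidableEq n] [Ring α] {P : Matrix l l α} {X B B' : Matrix l n α}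
    {Y : Matrix n l α} {Z : Matrix n n α}
    (h : fromBlocks P X Y Z * fromBlocks 1 B 0 1 = fromBlocks 1 B' 0 1 * fromBlocks P X Y Z) :
    Y * B = 0 ∧ P * B = B' * Z := by
  simp only [fromBlocks_multiply, fromBlocks_inj, Matrix.mul_one, Matrix.one_mul,
    Matrix.mul_zero, Matrix.zero_mul, add_zero, zero_add] at h
  exact ⟨by simpa using h.2.2.2, by simpa [add_comm] using h.2.1⟩

section conjugate

variable {m ν : ℕ} {T S : Matrix (Fin m) (Fin ν) ℝ}

lemma eq_zero_of_forall_mul_rhoBlock_eq_zero {κ : Type*} (hT : ∀ i, T i ≠ 0) (hν : 0 < ν)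
    {Y : Matrix κ (Fin (m + 1)) ℝ} (hY : ∀ a b, Y * rhoBlock T a b = 0) : Y = 0 := by
  ext k l
  induction l using Fin.lastCases with
  | last =>
    have h := congrFun (hY 0 fun _ => 1) k
    rw [mul_rhoBlock_zero_row] at h
    simpa using congrFun h ⟨0, hν⟩
  | cast i =>
    have h := congrFun (hY (Pi.single i 1) 0) k
    rw [mul_rhoBlock_single_row] at h
    exact (smul_eq_zero.1 h).resolve_right (hT i)

variable {P : Matrix (Fin (m + 1)) (Fin (m + 1)) ℝ} {Z : Matrix (Fin ν) (Fin ν) ℝ}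

lemma exists_mul_rhoBlock_row_eq_smul
    (hPZ : ∀ a b, ∃ a' b', P * rhoBlock T a b = rhoBlock S a' b' * Z) (a : Fin m → ℝ)
    (b : Fin ν → ℝ) (k : Fin m) : ∃ s : ℝ, (P * rhoBlock T a b) k.castSucc = s • (S k ᵥ* Z) := by
  obtain ⟨a', b', h⟩ := hPZ a b
  exact ⟨a' k, by rw [h, rhoBlock_mul_row_castSucc]⟩

lemma castSucc_last_eq_zero_of_mul_rhoBlock_eq (h2 : 2 ≤ ν)
    (hPZ : ∀ a b, ∃ a' b', P * rhoBlock T a b = rhoBlock S a' b' * Z) (k : Fin m) :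
    P k.castSucc (Fin.last m) = 0 := by
  refine eq_zero_of_forall_smul_single_eq h2 (w := S k ᵥ* Z) fun j => ?_
  obtain ⟨s, hs⟩ := exists_mul_rhoBlock_row_eq_smul hPZ 0 (Pi.single j 1) k
  exact ⟨s, by rwa [mul_rhoBlock_zero_row] at hs⟩

lemma exists_smul_eq_of_mul_rhoBlock_eq
    (hPZ : ∀ a b, ∃ a' b', P * rhoBlock T a b = rhoBlock S a' b' * Z) {i k : Fin m}
    (hki : P k.castSucc i.castSucc ≠ 0) : ∃ s : ℝ, s • (S k ᵥ* Z) = T i := by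
  obtain ⟨s, hs⟩ := exists_mul_rhoBlock_row_eq_smul hPZ (Pi.single i 1) 0 k
  rw [mul_rhoBlock_single_row] at hs
  exact ⟨(P k.castSucc i.castSucc)⁻¹ * s, by rw [mul_smul, ← hs, inv_smul_smul₀ hki]⟩

end conjugate

theorem projEquivalent_of_conj {n m : ℕ} (hn : 1 ≤ n) (hnm : n + 1 ≤ m)
    {T S : Matrix (Fin m) (Fin (n + 1)) ℝ} (hT : Generic T) (hS : Generic S)
    (R : Matrix.SpecialLinearGroup (Fin (m + 1) ⊕ Fin (n + 1)) ℝ)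
    (hR : (fun g => R * g * R⁻¹) '' LTgrp T = LTgrp S) :
    ProjEquivalent (projRows hnm T hT) (projRows hnm S hS) := by
  set M : Matrix (Fin (m + 1) ⊕ Fin (n + 1)) (Fin (m + 1) ⊕ Fin (n + 1)) ℝ := ↑R with hM
  have hblocks (a b) : ∃ a' b', M.toBlocks₂₁ * rhoBlock T a b = 0 ∧
      M.toBlocks₁₁ * rhoBlock T a b = rhoBlock S a' b' * M.toBlocks₂₂ := by
    obtain ⟨a', b', h⟩ : R * rhoT T a b * R⁻¹ ∈ LTgrp S := hR ▸ mem_image_of_mem _ ⟨a, b, rfl⟩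
    replace h : R * rhoT T a b = rhoT S a' b' * R := by rw [← h, inv_mul_cancel_right]
    replace h := congrArg Subtype.val h
    rw [Matrix.SpecialLinearGroup.coe_mul, Matrix.SpecialLinearGroup.coe_mul, ← hM] at h
    rw [rhoT_coe, rhoT_coe, ← fromBlocks_toBlocks M] at h
    exact ⟨a', b', blocks_of_fromBlocks_mul_eq_mul_fromBlocks h⟩
  set P := M.toBlocks₁₁
  set Z := M.toBlocks₂₂
  have hY : M.toBlocks₂₁ = 0 :=
    eq_zero_of_forall_mul_rhoBlock_eq_zero (hT.row_ne_zero (by omega) hnm) (by omega)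
      fun a b => by obtain ⟨-, -, h, -⟩ := hblocks a b; exact h
  have hPZ (a b) : ∃ a' b', P * rhoBlock T a b = rhoBlock S a' b' * Z := by
    obtain ⟨a', b', -, h⟩ := hblocks a b
    exact ⟨a', b', h⟩
  have hdet : P.det * Z.det = 1 := by
    rw [← det_fromBlocks_zero₂₁ P M.toBlocks₁₂ Z, ← hY, fromBlocks_toBlocks]
    exact R.prop
  have hP : (P.submatrix Fin.castSucc Fin.castSucc).det ≠ 0 := by
    intro h0
    rw [det_eq_mul_det_submatrix_castSucc P
      (castSucc_last_eq_zero_of_mul_rhoBlock_eq (by omega) hPZ), h0] at hdet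
    simp at hdet
  have hcol (i : Fin m) : ∃ k : Fin m, P k.castSucc i.castSucc ≠ 0 := by
    by_contra! h
    exact hP (det_eq_zero_of_column_eq_zero i h)
  choose τ hτ using hcol
  have hZ : IsUnit Zᵀ.det := by
    rw [det_transpose]
    exact .of_mul_eq_one_right _ hdet
  let E := Zᵀ.toLinearEquiv' (invertibleOfIsUnitDet _ hZ)
  refine .of_injective (hT.projRows_injective hn hnm) τ E fun i => ?_
  obtain ⟨s, hs⟩ := exists_smul_eq_of_mul_rhoBlock_eq hPZ (hτ i)
  refine (Projectivization.mk_eq_mk_iff' ℝ _ _ _ _).2 ⟨s, ?_⟩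
  simpa [E, mulVec_transpose] using hs

section construction

variable {m ν : ℕ} {T S : Matrix (Fin m) (Fin ν) ℝ}

lemma image_conj_LTgrp_eq (R : Matrix.SpecialLinearGroup (Fin (m + 1) ⊕ Fin ν) ℝ)
    {A : (Fin m → ℝ) → Fin m → ℝ} {B : (Fin ν → ℝ) → Fin ν → ℝ} (hA : Surjective A)
    (hB : Surjective B) (h : ∀ a b, R * rhoT T a b * R⁻¹ = rhoT S (A a) (B b)) :
    (fun g => R * g * R⁻¹) '' LTgrp T = LTgrp S := by
  ext g
  constructor
  · rintro ⟨_, ⟨a, b, rfl⟩, rfl⟩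
    exact ⟨A a, B b, h a b⟩
  · rintro ⟨a', b', rfl⟩
    obtain ⟨a, rfl⟩ := hA a'
    obtain ⟨b, rfl⟩ := hB b'
    exact ⟨_, ⟨a, b, rfl⟩, h a b⟩

lemma conj_rhoT_eq_of_mul_rhoBlock_eq (R : Matrix.SpecialLinearGroup (Fin (m + 1) ⊕ Fin ν) ℝ)
    {P : Matrix (Fin (m + 1)) (Fin (m + 1)) ℝ} {Q : Matrix (Fin ν) (Fin ν) ℝ}
    (hR : (R : Matrix (Fin (m + 1) ⊕ Fin ν) (Fin (m + 1) ⊕ Fin ν) ℝ) = fromBlocks P 0 0 Q)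
    {a a' b b'} (h : P * rhoBlock T a b = rhoBlock S a' b' * Q) :
    R * rhoT T a b * R⁻¹ = rhoT S a' b' := by
  rw [mul_inv_eq_iff_eq_mul]
  ext1
  simp [hR, rhoT_coe, fromBlocks_multiply, h]

theorem exists_conj_LTgrp_eq_of_rows (σ : Equiv.Perm (Fin m))
    (e : (Fin ν → ℝ) ≃ₗ[ℝ] (Fin ν → ℝ)) (c : Fin m → ℝˣ) (h : ∀ k, S k = c k • e (T (σ k))) :
    ∃ R : Matrix.SpecialLinearGroup (Fin (m + 1) ⊕ Fin ν) ℝ,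
      (fun g => R * g * R⁻¹) '' LTgrp T = LTgrp S := by
  let σ' := σ.viaFintypeEmbedding Fin.castSuccEmb
  have hσ'_castSucc (k : Fin m) : σ' k.castSucc = (σ k).castSucc :=
    σ.viaFintypeEmbedding_apply_image Fin.castSuccEmb k
  have hσ'_last : σ' (Fin.last m) = Fin.last m :=
    σ.viaFintypeEmbedding_apply_notMem_range Fin.castSuccEmb
      fun ⟨k, hk⟩ => (Fin.castSucc_lt_last k).ne hk
  let Q : Matrix (Fin ν) (Fin ν) ℝ := (LinearMap.toMatrix' e.symm.toLinearMap)ᵀ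
  have hQ (v : Fin ν → ℝ) : v ᵥ* Q = e.symm v := by simp [Q, vecMul_transpose]
  have hQdet : Q.det ≠ 0 := by
    simpa [Q, LinearMap.det_toMatrix'] using (LinearEquiv.isUnit_det' e.symm).ne_zero
  -- the last row of the upper-left block is scaled by `t` to make the determinant `1`
  let t := ((σ'.permMatrix ℝ).det * Q.det)⁻¹
  have ht : t ≠ 0 := by simp [t, hQdet]
  let d : Fin (m + 1) → ℝ := update 1 (Fin.last m) t
  let P := diagonal d * σ'.permMatrix ℝ
  have hP (M : Matrix (Fin (m + 1)) (Fin ν) ℝ) (k) : (P * M) k = d k • M (σ' k) := by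
    ext j
    simp [P, Matrix.mul_assoc, PEquiv.toMatrix_toPEquiv_mul, diagonal_mul]
  have hdet : (fromBlocks P 0 0 Q).det = 1 := by
    rw [det_fromBlocks_zero₂₁, det_mul, det_diagonal, Finset.prod_update_of_mem (Finset.mem_univ _)]
    simp [t, hQdet]
  refine ⟨⟨fromBlocks P 0 0 Q, hdet⟩, image_conj_LTgrp_eq _ (A := fun a k => a (σ k) * (c k : ℝ)⁻¹)
    (B := fun b => e (t • b)) ?_ ?_ fun a b => conj_rhoT_eq_of_mul_rhoBlock_eq _ rfl ?_⟩
  · intro a'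
    refine ⟨fun i => a' (σ.symm i) * c (σ.symm i), ?_⟩
    ext k
    simp
  · intro b'
    refine ⟨t⁻¹ • e.symm b', ?_⟩
    simp [ht]
  · funext k
    induction k using Fin.lastCases with
    | last => simp [hP, rhoBlock_mul_row_last, hσ'_last, hQ, d]
    | cast k =>
      simp only [hP, d, update_of_ne (Fin.castSucc_ne_last k), Pi.one_apply, one_mul,
        hσ'_castSucc, rhoBlock_castSucc, rhoBlock_mul_row_castSucc, h k, Units.smul_def, map_smul,
        hQ, LinearEquiv.symm_apply_apply, smul_smul, inv_mul_cancel_right₀ (c k).ne_zero]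

end construction

theorem exists_conj_LTgrp_eq_of_projEquivalent {n m : ℕ} (hnm : n + 1 ≤ m)
    {T S : Matrix (Fin m) (Fin (n + 1)) ℝ} (hT : Generic T) (hS : Generic S)
    (h : ProjEquivalent (projRows hnm S hS) (projRows hnm T hT)) :
    ∃ R : Matrix.SpecialLinearGroup (Fin (m + 1) ⊕ Fin (n + 1)) ℝ,
      (fun g => R * g * R⁻¹) '' LTgrp T = LTgrp S := by
  obtain ⟨σ, e, h⟩ := h
  have hc (k) : ∃ c : ℝˣ, c • e (T (σ k)) = S k :=
    (Projectivization.mk_eq_mk_iff ℝ _ _ _ _).1 (h k)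
  choose c hc using hc
  exact exists_conj_LTgrp_eq_of_rows σ e c fun k => (hc k).symm

/-- with `ν = n + 1 ≥ 2` columns, `m ≥ ν + 2` rows, the map
`[T] ↦ [L_T]` from equivalence classes of generic `m × ν` matrices to conjugacy classes
of subgroups of `SL_{m+ν+1}(ℝ)` is well defined and injective: `L_T` and `L_S` are
conjugate iff the unordered generalized cross ratios of the projectivized rows of `T`
and of `S` agree. -/
theorem LT_conjugate_iff_UC {n m : ℕ} (hm : n + 3 ≤ m) (hn : 1 ≤ n)
    (T S : Matrix (Fin m) (Fin (n + 1)) ℝ) (hT : Generic T) (hS : Generic S) :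
    (∃ R : Matrix.SpecialLinearGroup (Fin (m + 1) ⊕ Fin (n + 1)) ℝ,
        (fun g => R * g * R⁻¹) '' LTgrp T = LTgrp S) ↔
      UC (projRows (by omega) T hT) = UC (projRows (by omega) S hS) := by
  rw [UC_eq_iff_projEquivalent (UC_projRows_nonempty (by omega) T hT)]
  exact ⟨fun ⟨R, hR⟩ => projEquivalent_of_conj hn _ hT hS R hR,
    fun h => exists_conj_LTgrp_eq_of_projEquivalent _ hT hS h.symm⟩
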